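/- arXiv:1410.1404 — 2 statements merged into one kernel-verified Lean document; each statement's English description precedes it below -/
import Mathlib

section
/- For a, b ∈ 𝒜, let T_{a,b} ∈ End(𝒜) be the left slice of W with the functional ω_{a,b}, i.e. the unique linear operator satisfying ⟨c, T_{a,b}(x)⟩ = ⟨a⊗c, W(b⊗x)⟩ for all c, x ∈ 𝒜. Then T_{a,b} is the operator of left multiplication by the element (h⊗id)((a*⊗1)Δ(b)) ∈ 𝒜, and the linear span of { T_{a,b} : a, b ∈ 𝒜 } equals the set of all operators of left multiplication by elements of 𝒜. -/
/- Setting: a finite quantum group `A` with Haar functional `h`, inner products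
`⟨a, b⟩ = h(a* b)` on `A` and `⟨a ⊗ b, c ⊗ d⟩ = h(a* c)·h(b* d)` on `A ⊗ A`
(realized as `⟨x, y⟩ = (h ⊗ h)(s(x)·y)` where `s` is the star operation of `A ⊗ A`).
STATEMENT 2: for `a b : A`, the left slice `T_{a,b}` of `W` by `ω_{a,b}` — i.e. the
(unique) operator `T` with `⟨c, T x⟩ = ⟨a ⊗ c, W(b ⊗ x)⟩` for all `c x` — is left
multiplication by `(h ⊗ id)((a* ⊗ 1)Δ(b))`, and the span of all the `T_{a,b}` is
exactly the set of all left multiplication operators. -/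

open scoped TensorProduct ComplexOrder
open TensorProduct

section
variable {A : Type*} [Ring A] [HopfAlgebra ℂ A] [StarRing A] [StarModule ℂ A]
  [FiniteDimensional ℂ A]

/-- The multiplicative unitary `W : a ⊗ b ↦ Δ(a)(1 ⊗ b)`. -/
noncomputable def Wmap : A ⊗[ℂ] A →ₗ[ℂ] A ⊗[ℂ] A :=
  LinearMap.mul' ℂ (A ⊗[ℂ] A) ∘ₗ
    TensorProduct.map (Coalgebra.comul (R := ℂ)) (TensorProduct.mk ℂ A A 1)

/-- `h ⊗ id : A ⊗ A → A`. -/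
noncomputable def lap (h : A →ₗ[ℂ] ℂ) : A ⊗[ℂ] A →ₗ[ℂ] A :=
  (TensorProduct.lid ℂ A).toLinearMap ∘ₗ TensorProduct.map h LinearMap.id

/-- `id ⊗ h : A ⊗ A → A`. -/
noncomputable def rap (h : A →ₗ[ℂ] ℂ) : A ⊗[ℂ] A →ₗ[ℂ] A :=
  (TensorProduct.rid ℂ A).toLinearMap ∘ₗ TensorProduct.map LinearMap.id h

/-- `h ⊗ h : A ⊗ A → ℂ`. -/
noncomputable def hten (h : A →ₗ[ℂ] ℂ) : A ⊗[ℂ] A →ₗ[ℂ] ℂ :=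
  LinearMap.mul' ℂ ℂ ∘ₗ TensorProduct.map h h


set_option linter.unusedSectionVars false in
lemma key_calc {A : Type*} [Ring A] [HopfAlgebra ℂ A] [StarRing A] [StarModule ℂ A]
    [FiniteDimensional ℂ A] (h : A →ₗ[ℂ] ℂ) (a c x : A) (t : A ⊗[ℂ] A) :
    hten h ((star a ⊗ₜ[ℂ] star c) * (t * ((1 : A) ⊗ₜ[ℂ] x))) =
      h (star c * (lap h ((star a ⊗ₜ[ℂ] (1 : A)) * t) * x)) := by
  induction t using TensorProduct.induction_on with
  | zero => simp
  | tmul u v =>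
      simp [hten, lap, Algebra.TensorProduct.tmul_mul_tmul, LinearMap.mul'_apply,
        mul_smul_comm, smul_mul_assoc, mul_assoc]
  | add y z hy hz =>
      simp only [add_mul, mul_add, map_add, hy, hz]

set_option linter.unusedSectionVars false in
lemma key {A : Type*} [Ring A] [HopfAlgebra ℂ A] [StarRing A] [StarModule ℂ A]
    [FiniteDimensional ℂ A] (h : A →ₗ[ℂ] ℂ) (s : A ⊗[ℂ] A → A ⊗[ℂ] A)
    (hs_tmul : ∀ a b : A, s (a ⊗ₜ[ℂ] b) = star a ⊗ₜ[ℂ] star b) (a b c x : A) :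
    hten h (s (a ⊗ₜ[ℂ] c) * Wmap (b ⊗ₜ[ℂ] x)) =
      h (star c * (lap h ((star a ⊗ₜ[ℂ] (1 : A)) * Coalgebra.comul b) * x)) := by
  have hW : Wmap (b ⊗ₜ[ℂ] x) = Coalgebra.comul (R := ℂ) b * ((1 : A) ⊗ₜ[ℂ] x) := by
    simp [Wmap, LinearMap.mul'_apply]
  rw [hs_tmul, hW, ← mul_assoc]
  have := key_calc h a c x (Coalgebra.comul (R := ℂ) b)
  rw [← mul_assoc] at this
  exact this

/-- `a ↦ h(a·)` as a linear map into the dual. -/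
noncomputable def betaMap {A : Type*} [Ring A] [HopfAlgebra ℂ A]
    (h : A →ₗ[ℂ] ℂ) : A →ₗ[ℂ] Module.Dual ℂ A :=
  (LinearMap.llcomp ℂ A A ℂ h) ∘ₗ (LinearMap.mul ℂ A)

theorem left_slices_of_W
    -- the Haar functional and its properties
    (h : A →ₗ[ℂ] ℂ) (h_unital : h 1 = 1)
    (h_pos : ∀ a : A, 0 ≤ h (star a * a))
    (h_faithful : ∀ a : A, h (star a * a) = 0 → a = 0)
    (h_left_inv : ∀ a : A, lap h (Coalgebra.comul a) = h a • 1)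
    (h_right_inv : ∀ a : A, rap h (Coalgebra.comul a) = h a • 1)
    -- `s` is the star operation of the *-algebra `A ⊗ A`
    (s : A ⊗[ℂ] A → A ⊗[ℂ] A)
    (hs_add : ∀ x y : A ⊗[ℂ] A, s (x + y) = s x + s y)
    (hs_smul : ∀ (r : ℂ) (x : A ⊗[ℂ] A), s (r • x) = (starRingEnd ℂ) r • s x)
    (hs_tmul : ∀ a b : A, s (a ⊗ₜ[ℂ] b) = star a ⊗ₜ[ℂ] star b)
    -- the comultiplication is a *-homomorphism (Hopf *-algebra structure)
    (hcomul_star : ∀ a : A, Coalgebra.comul (R := ℂ) (star a) = s (Coalgebra.comul a)) :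
    -- (1) any operator `T` satisfying `⟨c, T x⟩ = ⟨a ⊗ c, W (b ⊗ x)⟩` is left
    -- multiplication by `(h ⊗ id)((a* ⊗ 1)·Δ(b))`
    (∀ a b : A, ∀ T : A →ₗ[ℂ] A,
      (∀ c x : A, h (star c * T x) = hten h (s (a ⊗ₜ[ℂ] c) * Wmap (b ⊗ₜ[ℂ] x))) →
      T = LinearMap.mulLeft ℂ (lap h ((star a ⊗ₜ[ℂ] (1 : A)) * Coalgebra.comul b))) ∧
    -- (2) the linear span of the slices `T_{a,b}` is the set of all left
    -- multiplication operators
    Submodule.span ℂ {T : A →ₗ[ℂ] A | ∃ a b : A,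
        ∀ c x : A, h (star c * T x) = hten h (s (a ⊗ₜ[ℂ] c) * Wmap (b ⊗ₜ[ℂ] x))} =
      LinearMap.range (LinearMap.mul ℂ A) := by
  have part1 : ∀ a b : A, ∀ T : A →ₗ[ℂ] A,
      (∀ c x : A, h (star c * T x) = hten h (s (a ⊗ₜ[ℂ] c) * Wmap (b ⊗ₜ[ℂ] x))) →
      T = LinearMap.mulLeft ℂ (lap h ((star a ⊗ₜ[ℂ] (1 : A)) * Coalgebra.comul b)) := by
    intro a b T hT
    set m := lap h ((star a ⊗ₜ[ℂ] (1 : A)) * Coalgebra.comul b) with hm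
    ext x
    have hz : ∀ c : A, h (star c * (T x - m * x)) = 0 := by
      intro c
      rw [mul_sub, map_sub, hT c x, key h s hs_tmul a b c x, sub_self]
    have h0 := h_faithful _ (hz (T x - m * x))
    have : T x = m * x := by rwa [sub_eq_zero] at h0
    simpa using this
  refine ⟨part1, ?_⟩
  -- find `e` with `h (e * x) = ε x`
  have hβinj : Function.Injective (betaMap h) := by
    rw [injective_iff_map_eq_zero]
    intro a ha
    have h1 : h (a * star a) = 0 := by
      have := congrArg (fun f => f (star a)) ha
      simpa [betaMap] using this
    have h2 : star a = 0 := h_faithful (star a) (by rwa [star_star])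
    simpa using congrArg star h2
  have hβsurj : Function.Surjective (betaMap h) :=
    (LinearMap.injective_iff_surjective_of_finrank_eq_finrank
      Subspace.dual_finrank_eq.symm).mp hβinj
  obtain ⟨e, he⟩ := hβsurj (Coalgebra.counit (R := ℂ))
  have he' : ∀ x : A, h (e * x) = Coalgebra.counit (R := ℂ) x := by
    intro x; rw [← he]; rfl
  have hconv : ∀ t : A ⊗[ℂ] A, lap h ((e ⊗ₜ[ℂ] (1 : A)) * t) =
      (TensorProduct.lid ℂ A) ((Coalgebra.counit (R := ℂ)).rTensor A t) := by
    intro t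
    induction t using TensorProduct.induction_on with
    | zero => simp
    | tmul u v =>
        simp [lap, Algebra.TensorProduct.tmul_mul_tmul, LinearMap.rTensor_tmul, he' u]
    | add y z hy hz => simp only [mul_add, map_add, hy, hz]
  apply le_antisymm
  · rw [Submodule.span_le]
    rintro T ⟨a, b, hT⟩
    rw [part1 a b T hT]
    exact ⟨lap h ((star a ⊗ₜ[ℂ] (1 : A)) * Coalgebra.comul b), by ext x; rfl⟩
  · rintro f ⟨m, rfl⟩
    apply Submodule.subset_span
    refine ⟨star e, m, fun c x => ?_⟩
    rw [key h s hs_tmul, star_star, hconv (Coalgebra.comul m),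
      Coalgebra.rTensor_counit_comul, TensorProduct.lid_tmul, one_smul]
    rfl


end
end

section
/- The adjoint of W with respect to the Haar inner product is the linear map W' determined by W'(a⊗b) = ((id⊗S)Δ(a))·(1⊗b); that is, ⟨W(x), y⟩ = ⟨x, W'(y)⟩ for all x, y ∈ 𝒜⊗𝒜. (This expresses the identity (id⊗S)W = W*.) -/
/- Setting: a finite quantum group `A` with Haar functional `h` and the inner product
`⟨a ⊗ b, c ⊗ d⟩ = h(a* c)·h(b* d)` on `A ⊗ A`, realized as `⟨x, y⟩ = (h ⊗ h)(s(x)·y)`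
where `s` is the star operation of `A ⊗ A`.
STATEMENT 5: the adjoint of `W` is the map `W' : a ⊗ b ↦ ((id ⊗ S)Δ(a))·(1 ⊗ b)`,
i.e. `⟨W x, y⟩ = ⟨x, W' y⟩` for all `x y` (the identity `(id ⊗ S)W = W*`). -/

open scoped TensorProduct ComplexOrder
open TensorProduct

section
variable {A : Type*} [Ring A] [HopfAlgebra ℂ A] [StarRing A] [StarModule ℂ A]
  [FiniteDimensional ℂ A]

/-- The map `W' : a ⊗ b ↦ ((id ⊗ S)Δ(a))·(1 ⊗ b)`. -/
noncomputable def Wmap' : A ⊗[ℂ] A →ₗ[ℂ] A ⊗[ℂ] A :=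
  LinearMap.mul' ℂ (A ⊗[ℂ] A) ∘ₗ
    TensorProduct.map
      (TensorProduct.map LinearMap.id (HopfAlgebra.antipode (R := ℂ)) ∘ₗ
        Coalgebra.comul (R := ℂ))
      (TensorProduct.mk ℂ A A 1)

lemma lap_tmul (h : A →ₗ[ℂ] ℂ) (x y : A) : lap h (x ⊗ₜ[ℂ] y) = h x • y := by
  simp [lap]

lemma hten_tmul (h : A →ₗ[ℂ] ℂ) (x y : A) : hten h (x ⊗ₜ[ℂ] y) = h x * h y := by
  simp [hten]

lemma lap_mul_right (h : A →ₗ[ℂ] ℂ) (t : A ⊗[ℂ] A) (x y z : A) :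
    lap h (t * (x ⊗ₜ[ℂ] y)) * z = lap h (t * (x ⊗ₜ[ℂ] (y * z))) := by
  induction t using TensorProduct.induction_on with
  | zero => simp
  | tmul p q => simp [Algebra.TensorProduct.tmul_mul_tmul, lap_tmul, smul_mul_assoc, mul_assoc]
  | add t1 t2 ih1 ih2 => simp only [add_mul, map_add, ih1, ih2]

set_option synthInstance.maxHeartbeats 400000 in
/-- Strong left invariance: `Σ h(u₁ c) u₂ = Σ h(u c₁) S(c₂)`. -/
lemma strong_left_inv (h : A →ₗ[ℂ] ℂ)
    (h_left_inv : ∀ a : A, lap h (Coalgebra.comul a) = h a • 1)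
    (u c : A) :
    lap h (Coalgebra.comul (R := ℂ) u * (c ⊗ₜ[ℂ] (1 : A))) =
    lap h (TensorProduct.map LinearMap.id (HopfAlgebra.antipode (R := ℂ))
      ((u ⊗ₜ[ℂ] (1 : A)) * Coalgebra.comul (R := ℂ) c)) := by
  set S : A →ₗ[ℂ] A := HopfAlgebra.antipode (R := ℂ) with hS
  set Δ : A →ₗ[ℂ] A ⊗[ℂ] A := Coalgebra.comul (R := ℂ) with hΔ
  set f : A ⊗[ℂ] A →ₗ[ℂ] A := lap h ∘ₗ LinearMap.mulLeft ℂ (Δ u) with hf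
  have claimBC : ∀ z : A ⊗[ℂ] A,
      lap h (TensorProduct.map LinearMap.id S ((u ⊗ₜ[ℂ] (1 : A)) * z)) =
      LinearMap.mul' ℂ A (TensorProduct.map f S (Δ.rTensor A z)) := by
    intro z
    induction z using TensorProduct.induction_on with
    | zero => simp
    | tmul x y =>
      simp only [Algebra.TensorProduct.tmul_mul_tmul, one_mul, map_tmul,
        LinearMap.id_coe, id_eq, LinearMap.rTensor_tmul, LinearMap.mul'_apply,
        lap_tmul, hf, LinearMap.coe_comp, Function.comp_apply, LinearMap.mulLeft_apply]
      rw [hΔ, ← Bialgebra.comul_mul, h_left_inv, smul_mul_assoc, one_mul]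
    | add z1 z2 ih1 ih2 => simp only [mul_add, map_add, ih1, ih2]
  have claimD1 : ∀ (x : A) (w : A ⊗[ℂ] A),
      LinearMap.mul' ℂ A (TensorProduct.map f S
        ((TensorProduct.assoc ℂ A A A).symm (x ⊗ₜ[ℂ] w))) =
      lap h (Δ u * (x ⊗ₜ[ℂ] (LinearMap.mul' ℂ A (S.lTensor A w)))) := by
    intro x w
    induction w using TensorProduct.induction_on with
    | zero => simp
    | tmul y z =>
      simp only [TensorProduct.assoc_symm_tmul, map_tmul, LinearMap.mul'_apply,
        LinearMap.lTensor_tmul, hf, LinearMap.coe_comp, Function.comp_apply,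
        LinearMap.mulLeft_apply]
      rw [lap_mul_right]
    | add w1 w2 ih1 ih2 =>
      simp only [tmul_add, map_add, mul_add, ih1, ih2]
  have claimD : ∀ z : A ⊗[ℂ] A,
      LinearMap.mul' ℂ A (TensorProduct.map f S
        ((TensorProduct.assoc ℂ A A A).symm (Δ.lTensor A z))) =
      lap h (Δ u * ((rap (Coalgebra.counit (R := ℂ)) z) ⊗ₜ[ℂ] (1 : A))) := by
    intro z
    induction z using TensorProduct.induction_on with
    | zero => simp
    | tmul x y =>
      rw [LinearMap.lTensor_tmul, claimD1 x (Δ y)]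
      rw [hΔ, HopfAlgebra.mul_antipode_lTensor_comul_apply]
      have hr : rap (Coalgebra.counit (R := ℂ)) (x ⊗ₜ[ℂ] y)
          = Coalgebra.counit (R := ℂ) y • x := by simp [rap]
      rw [hr, Algebra.algebraMap_eq_smul_one, tmul_smul, smul_tmul']
    | add z1 z2 ih1 ih2 =>
      simp only [map_add, add_tmul, mul_add, ih1, ih2]
  have hrapc : rap (Coalgebra.counit (R := ℂ)) (Δ c) = c := by
    have h1 : TensorProduct.map (LinearMap.id (R := ℂ) (M := A))
        (Coalgebra.counit (R := ℂ) (A := A))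
        = (Coalgebra.counit (R := ℂ) (A := A)).lTensor A := rfl
    rw [rap, LinearMap.coe_comp, Function.comp_apply, h1, hΔ,
      Coalgebra.lTensor_counit_comul]
    simp
  calc lap h (Δ u * (c ⊗ₜ[ℂ] (1 : A)))
      = lap h (Δ u * ((rap (Coalgebra.counit (R := ℂ)) (Δ c)) ⊗ₜ[ℂ] (1 : A))) := by
        rw [hrapc]
    _ = LinearMap.mul' ℂ A (TensorProduct.map f S
          ((TensorProduct.assoc ℂ A A A).symm (Δ.lTensor A (Δ c)))) := (claimD (Δ c)).symm
    _ = LinearMap.mul' ℂ A (TensorProduct.map f S (Δ.rTensor A (Δ c))) := by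
        rw [hΔ, Coalgebra.coassoc_symm_apply]
    _ = lap h (TensorProduct.map LinearMap.id S ((u ⊗ₜ[ℂ] (1 : A)) * Δ c)) :=
        (claimBC (Δ c)).symm

lemma hten_L1 (h : A →ₗ[ℂ] ℂ) (b' c d : A) (t : A ⊗[ℂ] A) :
    hten h ((1 ⊗ₜ[ℂ] b') * t * (c ⊗ₜ[ℂ] d)) = h (b' * lap h (t * (c ⊗ₜ[ℂ] (1 : A))) * d) := by
  induction t using TensorProduct.induction_on with
  | zero => simp
  | tmul p q =>
    simp only [Algebra.TensorProduct.tmul_mul_tmul, one_mul, mul_one, hten_tmul, lap_tmul,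
      mul_smul_comm, smul_mul_assoc, map_smul, smul_eq_mul]
  | add t1 t2 ih1 ih2 => simp only [add_mul, mul_add, map_add, ih1, ih2]

lemma hten_L2 (h : A →ₗ[ℂ] ℂ) (u b' d : A) (w : A ⊗[ℂ] A) :
    hten h ((u ⊗ₜ[ℂ] b') *
        (TensorProduct.map LinearMap.id (HopfAlgebra.antipode (R := ℂ)) w) * ((1 : A) ⊗ₜ[ℂ] d)) =
    h (b' * lap h (TensorProduct.map LinearMap.id (HopfAlgebra.antipode (R := ℂ))
        ((u ⊗ₜ[ℂ] (1 : A)) * w)) * d) := by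
  induction w using TensorProduct.induction_on with
  | zero => simp
  | tmul x y =>
    simp only [map_tmul, LinearMap.id_coe, id_eq, Algebra.TensorProduct.tmul_mul_tmul,
      one_mul, mul_one, hten_tmul, lap_tmul, mul_smul_comm, smul_mul_assoc, map_smul,
      smul_eq_mul]
  | add w1 w2 ih1 ih2 => simp only [mul_add, add_mul, map_add, ih1, ih2]

theorem W_adjoint
    -- the Haar functional and its properties
    (h : A →ₗ[ℂ] ℂ) (h_unital : h 1 = 1)
    (h_pos : ∀ a : A, 0 ≤ h (star a * a))
    (h_faithful : ∀ a : A, h (star a * a) = 0 → a = 0)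
    (h_left_inv : ∀ a : A, lap h (Coalgebra.comul a) = h a • 1)
    (h_right_inv : ∀ a : A, rap h (Coalgebra.comul a) = h a • 1)
    -- `s` is the star operation of the *-algebra `A ⊗ A`
    (s : A ⊗[ℂ] A → A ⊗[ℂ] A)
    (hs_add : ∀ x y : A ⊗[ℂ] A, s (x + y) = s x + s y)
    (hs_smul : ∀ (r : ℂ) (x : A ⊗[ℂ] A), s (r • x) = (starRingEnd ℂ) r • s x)
    (hs_tmul : ∀ a b : A, s (a ⊗ₜ[ℂ] b) = star a ⊗ₜ[ℂ] star b)
    -- the comultiplication is a *-homomorphism (Hopf *-algebra structure)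
    (hcomul_star : ∀ a : A, Coalgebra.comul (R := ℂ) (star a) = s (Coalgebra.comul a)) :
    -- `⟨W x, y⟩ = ⟨x, W' y⟩`
    ∀ x y : A ⊗[ℂ] A, hten h (s (Wmap x) * y) = hten h (s x * Wmap' y) := by
  have s_zero : s 0 = 0 := by simpa using hs_smul 0 0
  have s_mul : ∀ p q : A ⊗[ℂ] A, s (p * q) = s q * s p := by
    intro p
    induction p using TensorProduct.induction_on with
    | zero => intro q; simp [s_zero]
    | tmul a b =>
      intro q
      induction q using TensorProduct.induction_on with
      | zero => simp [s_zero]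
      | tmul c d => simp [Algebra.TensorProduct.tmul_mul_tmul, hs_tmul, star_mul]
      | add q1 q2 ih1 ih2 => simp only [mul_add, hs_add, ih1, ih2, add_mul]
    | add p1 p2 ih1 ih2 => intro q; simp only [add_mul, hs_add, ih1 q, ih2 q, mul_add]
  intro x y
  induction x using TensorProduct.induction_on with
  | zero => simp [s_zero]
  | tmul a b =>
    induction y using TensorProduct.induction_on with
    | zero => simp
    | tmul c d =>
      have hW : Wmap (a ⊗ₜ[ℂ] b) = Coalgebra.comul (R := ℂ) a * ((1 : A) ⊗ₜ[ℂ] b) := by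
        simp [Wmap]
      have hW' : Wmap' (c ⊗ₜ[ℂ] d) =
          (TensorProduct.map LinearMap.id (HopfAlgebra.antipode (R := ℂ))
            (Coalgebra.comul (R := ℂ) c)) * ((1 : A) ⊗ₜ[ℂ] d) := by
        simp [Wmap']
      have hsW : s (Wmap (a ⊗ₜ[ℂ] b)) =
          ((1 : A) ⊗ₜ[ℂ] star b) * Coalgebra.comul (R := ℂ) (star a) := by
        rw [hW, s_mul, hs_tmul, star_one, hcomul_star]
      rw [hsW, hW', hs_tmul, ← mul_assoc, hten_L1, strong_left_inv h h_left_inv (star a) c,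
        ← hten_L2]
    | add y1 y2 ih1 ih2 => simp only [mul_add, map_add, ih1, ih2]
  | add x1 x2 ih1 ih2 => simp only [map_add, hs_add, add_mul, ih1, ih2]

end
end
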